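/- arXiv:math/9912072 — 2 statements merged into one kernel-verified Lean document; each statement's English description precedes it below -/
import Mathlib

section
/- Let V = V₁ ⊕ ⋯ ⊕ V_t be a direct sum of R-modules, and for each j let m_j : V → V be an R-linear automorphism with the property that m_j(v) - v ∈ V_j for all v ∈ V. Then for each k, the composition p_k ∘ m_k equals p_k ∘ (m_t ∘ ⋯ ∘ m₁) ∘ (m_{k-1} ∘ ⋯ ∘ m₁)⁻¹, where p_k : V → V_k is the projection onto the k-th summand. -/
def compUpTo {R : Type*} [CommRing R] {t : ℕ} {V : Fin t → Type*}
    [∀ i, AddCommGroup (V i)] [∀ i, Module R (V i)]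
    (m : Fin t → ((∀ i, V i) ≃ₗ[R] (∀ i, V i))) : ℕ → ((∀ i, V i) ≃ₗ[R] (∀ i, V i))
  | 0 => LinearEquiv.refl R _
  | k + 1 => if h : k < t then (compUpTo m k).trans (m ⟨k, h⟩) else compUpTo m k

/-!
Every `m j` with `j ≠ k` leaves the `k`-th coordinate unchanged, so in
`m_t ⋯ m_{k+1} m_k (m_{k-1} ⋯ m₁ w)` only `m_k` acts on that coordinate; taking
`w = (m_{k-1} ⋯ m₁)⁻¹ v` gives the identity.
-/

namespace compUpTo

variable {R : Type*} [CommRing R] {t : ℕ} {V : Fin t → Type*}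
    [∀ i, AddCommGroup (V i)] [∀ i, Module R (V i)]
    (m : Fin t → ((∀ i, V i) ≃ₗ[R] (∀ i, V i)))

theorem succ_of_lt {n : ℕ} (hn : n < t) :
    compUpTo m (n + 1) = (compUpTo m n).trans (m ⟨n, hn⟩) := by
  simp only [compUpTo, hn, dite_true]

theorem succ_of_le {n : ℕ} (hn : t ≤ n) : compUpTo m (n + 1) = compUpTo m n := by
  simp only [compUpTo, not_lt.mpr hn, dite_false]

theorem apply_coord_eq_of_le {k : Fin t} {n n' : ℕ} (hnn' : n ≤ n')
    (hfix : ∀ j : Fin t, n ≤ j.val → ∀ x, m j x k = x k) (w : ∀ i, V i) :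
    compUpTo m n' w k = compUpTo m n w k := by
  induction n', hnn' using Nat.le_induction with
  | base => rfl
  | succ n' hn ih =>
    by_cases ht : n' < t
    · rw [succ_of_lt m ht, LinearEquiv.trans_apply, hfix ⟨n', ht⟩ hn, ih]
    · rw [succ_of_le m (not_lt.mp ht), ih]

end compUpTo

/-- p_k ∘ m_k = p_k ∘ (m_t ∘ ⋯ ∘ m₁) ∘ (m_{k-1} ∘ ⋯ ∘ m₁)⁻¹. -/
theorem stmt1 {R : Type*} [CommRing R] {t : ℕ} {V : Fin t → Type*}
    [∀ i, AddCommGroup (V i)] [∀ i, Module R (V i)]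
    (m : Fin t → ((∀ i, V i) ≃ₗ[R] (∀ i, V i)))
    (hm : ∀ j : Fin t, ∀ v : ∀ i, V i, ∀ i, i ≠ j → (m j v - v) i = 0)
    (k : Fin t) :
    ∀ v : ∀ i, V i, (m k v) k = (compUpTo m t ((compUpTo m k.val).symm v)) k := by
  intro v
  have hfix : ∀ j : Fin t, k.val + 1 ≤ j.val → ∀ x, m j x k = x k := fun j hj x =>
    sub_eq_zero.mp (hm j x k (Fin.ne_of_lt hj))
  rw [compUpTo.apply_coord_eq_of_le m k.isLt hfix, compUpTo.succ_of_lt m k.isLt,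
    LinearEquiv.trans_apply, LinearEquiv.apply_symm_apply]
end

section
/- Let V = V₁ ⊕ ⋯ ⊕ V_t be a direct sum of R-modules, for each j let m_j : V → V be a linear automorphism with m_j(v) - v ∈ V_j for all v, and let M = m_t ∘ ⋯ ∘ m₁. Then the kernel of (M - id) equals the set of vectors fixed by every m_j, i.e. {v ∈ V : M(v) = v} = {v ∈ V : m_j(v) = v for all j = 1,...,t}. -/
namespace compUpTo

variable {R : Type*} [CommRing R] {t : ℕ} {V : Fin t → Type*}
  [∀ i, AddCommGroup (V i)] [∀ i, Module R (V i)]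
  (m : Fin t → ((∀ i, V i) ≃ₗ[R] (∀ i, V i)))

theorem succ_apply_of_lt {k : ℕ} (h : k < t) (v : ∀ i, V i) :
    compUpTo m (k + 1) v = m ⟨k, h⟩ (compUpTo m k v) := by
  simp only [compUpTo, dif_pos h, LinearEquiv.trans_apply]

theorem succ_of_not_lt {k : ℕ} (h : ¬k < t) : compUpTo m (k + 1) = compUpTo m k := by
  simp only [compUpTo, dif_neg h]

theorem apply_eq_self_of_forall_fixed {v : ∀ i, V i} (hv : ∀ j, m j v = v) (k : ℕ) :
    compUpTo m k v = v := by
  induction k with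
  | zero => rfl
  | succ k ih =>
    by_cases h : k < t
    · rw [succ_apply_of_lt m h, ih, hv]
    · rw [succ_of_not_lt m h, ih]

variable {m}

theorem apply_apply_of_ne (hm : ∀ j : Fin t, ∀ v : ∀ i, V i, ∀ i, i ≠ j → (m j v - v) i = 0)
    {j i : Fin t} (hij : i ≠ j) (v : ∀ i, V i) : m j v i = v i :=
  sub_eq_zero.mp (hm j v i hij)

theorem apply_apply_of_le (hm : ∀ j : Fin t, ∀ v : ∀ i, V i, ∀ i, i ≠ j → (m j v - v) i = 0)
    (v : ∀ i, V i) {k : ℕ} {i : Fin t} (hki : k ≤ i) : compUpTo m k v i = v i := by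
  induction k with
  | zero => rfl
  | succ k ih =>
    have hk : k < t := by omega
    have hik : i ≠ ⟨k, hk⟩ := Fin.ne_of_val_ne (ne_of_gt hki)
    rw [succ_apply_of_lt m hk, apply_apply_of_ne hm hik, ih (by omega)]

theorem eq_self_of_succ_eq_self
    (hm : ∀ j : Fin t, ∀ v : ∀ i, V i, ∀ i, i ≠ j → (m j v - v) i = 0)
    {v : ∀ i, V i} {k : ℕ} (hv : compUpTo m (k + 1) v = v) : compUpTo m k v = v := by
  by_cases hk : k < t
  · funext i
    by_cases hik : i = ⟨k, hk⟩
    · exact apply_apply_of_le hm v (by rw [hik])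
    · rw [← apply_apply_of_ne hm hik (compUpTo m k v), ← succ_apply_of_lt m hk, hv]
  · rwa [← succ_of_not_lt m hk]

theorem eq_self_of_le (hm : ∀ j : Fin t, ∀ v : ∀ i, V i, ∀ i, i ≠ j → (m j v - v) i = 0)
    {v : ∀ i, V i} (hv : compUpTo m t v = v) {k : ℕ} (hk : k ≤ t) : compUpTo m k v = v := by
  induction hk using Nat.decreasingInduction with
  | self => exact hv
  | of_succ k _ ih => exact eq_self_of_succ_eq_self hm ih

end compUpTo

/-- The fixed vectors of M = m_t ∘ ⋯ ∘ m₁ are exactly the vectors fixed by every m_j. -/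
theorem stmt5 {R : Type*} [CommRing R] {t : ℕ} {V : Fin t → Type*}
    [∀ i, AddCommGroup (V i)] [∀ i, Module R (V i)]
    (m : Fin t → ((∀ i, V i) ≃ₗ[R] (∀ i, V i)))
    (hm : ∀ j : Fin t, ∀ v : ∀ i, V i, ∀ i, i ≠ j → (m j v - v) i = 0) :
    {v : ∀ i, V i | compUpTo m t v = v} = {v : ∀ i, V i | ∀ j : Fin t, m j v = v} := by
  ext v
  constructor
  · intro hv j
    calc m j v = m j (compUpTo m j v) := by rw [compUpTo.eq_self_of_le hm hv j.isLt.le]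
      _ = compUpTo m (j + 1) v := (compUpTo.succ_apply_of_lt m j.isLt v).symm
      _ = v := compUpTo.eq_self_of_le hm hv j.isLt
  · exact fun hv => compUpTo.apply_eq_self_of_forall_fixed m hv t
end
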